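/- If S(F,y) is periodic with least period N and minimal polynomial m(X), then the constant coefficient of m is nonzero (m(0) = 1 in ZMod 2), m divides X^N − 1, and N equals the order of m, i.e. N is the least T ≥ 1 such that m divides X^T − 1. -/

import Mathlib

/-- A nonzero polynomial `p` over `ZMod 2` is an annihilating (characteristic) polynomial
of the sequence `S(F,y) = (F^[k] y)ₖ` if for every `k ≥ 0`,
`∑_{i=0}^{deg p} (coeff of Xⁱ in p) • F^[k+i] y = 0`. -/
def IsAnnihilating (n : ℕ) (F : (Fin n → ZMod 2) → (Fin n → ZMod 2))
    (y : Fin n → ZMod 2) (p : Polynomial (ZMod 2)) : Prop :=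
  p ≠ 0 ∧ ∀ k : ℕ, ∑ i ∈ Finset.range (p.natDegree + 1), p.coeff i • F^[k + i] y = 0

/-! A polynomial `p` annihilates a sequence `s` exactly when `p(σ) s = 0` for the left shift `σ`,
so the annihilating polynomials of `s` form an ideal, generated by the monic one `μ` of least
degree. Periodicity with period `T` says that `X ^ T - 1` lies in this ideal; hence `μ ∣ X ^ T - 1`
holds for `T = N` and forces `N ≤ T` in general. Finally `X ∤ μ`, since `X ∤ X ^ N - 1`. -/

open Polynomial

section Shift

variable (R M : Type*) [CommRing R] [AddCommGroup M] [Module R M]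

def seqShift : Module.End R (ℕ → M) :=
  LinearMap.funLeft R M Nat.succ

variable {R M}

theorem seqShift_pow_apply (i : ℕ) (s : ℕ → M) (k : ℕ) : (seqShift R M ^ i) s k = s (k + i) := by
  induction i generalizing s with
  | zero => rfl
  | succ i ih =>
    rw [pow_succ, Module.End.mul_apply, ih]
    rfl

theorem aeval_seqShift_apply (p : R[X]) (s : ℕ → M) (k : ℕ) :
    aeval (seqShift R M) p s k = ∑ i ∈ Finset.range (p.natDegree + 1), p.coeff i • s (k + i) := by
  simp only [aeval_eq_sum_range, LinearMap.sum_apply, Finset.sum_apply, LinearMap.smul_apply,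
    Pi.smul_apply, seqShift_pow_apply]

theorem aeval_X_pow_sub_one_seqShift_eq_zero_iff {s : ℕ → M} {T : ℕ} :
    aeval (seqShift R M) (X ^ T - 1 : R[X]) s = 0 ↔ ∀ k, s (k + T) = s k := by
  simp only [map_sub, map_pow, aeval_X, map_one, LinearMap.sub_apply, Module.End.one_apply,
    sub_eq_zero, funext_iff, seqShift_pow_apply]

end Shift

section Annihilator

variable {R M : Type*} [CommRing R] [AddCommGroup M] [Module R M] {f : Module.End R M} {v : M}

theorem aeval_apply_eq_zero_of_dvd {p q : R[X]} (hpq : p ∣ q) (hp : aeval f p v = 0) :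
    aeval f q v = 0 := by
  obtain ⟨r, rfl⟩ := hpq
  rw [mul_comm, map_mul, Module.End.mul_apply, hp, map_zero]

theorem Polynomial.Monic.dvd_of_aeval_apply_eq_zero [Nontrivial R] {μ p : R[X]} (hμ : μ.Monic)
    (hμv : aeval f μ v = 0)
    (hmin : ∀ q : R[X], q ≠ 0 → aeval f q v = 0 → μ.natDegree ≤ q.natDegree)
    (hp : aeval f p v = 0) : μ ∣ p := by
  rw [← modByMonic_eq_zero_iff_dvd hμ]
  by_contra hr
  have hrv : aeval f (p %ₘ μ) v = 0 := by
    rw [eq_sub_of_add_eq (modByMonic_add_div p μ), map_sub, LinearMap.sub_apply, hp,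
      aeval_apply_eq_zero_of_dvd (dvd_mul_right μ _) hμv, sub_zero]
  have hlt : (p %ₘ μ).natDegree < μ.natDegree :=
    natDegree_lt_natDegree hr (degree_modByMonic_lt p hμ)
  exact (hmin _ hr hrv).not_gt hlt

end Annihilator

theorem coeff_zero_ne_zero_of_dvd_X_pow_sub_one {R : Type*} [CommRing R] [Nontrivial R]
    {μ : R[X]} {N : ℕ} (hN : N ≠ 0) (hμ : μ ∣ X ^ N - 1) : μ.coeff 0 ≠ 0 := by
  obtain ⟨q, hq⟩ := hμ
  have h := congrArg (coeff · 0) hq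
  simp only [coeff_sub, coeff_X_pow, coeff_one_zero, if_neg (Ne.symm hN), mul_coeff_zero] at h
  intro h0
  rw [h0, zero_mul, zero_sub, neg_eq_zero] at h
  exact one_ne_zero h

theorem isAnnihilating_iff {n : ℕ} {F : (Fin n → ZMod 2) → (Fin n → ZMod 2)}
    {y : Fin n → ZMod 2} {p : (ZMod 2)[X]} :
    IsAnnihilating n F y p ↔ p ≠ 0 ∧ aeval (seqShift (ZMod 2) _) p (fun k ↦ F^[k] y) = 0 := by
  simp only [IsAnnihilating, funext_iff, aeval_seqShift_apply, Pi.zero_apply]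

theorem minimal_polynomial_order_eq_least_period (n : ℕ)
    (F : (Fin n → ZMod 2) → (Fin n → ZMod 2)) (y : Fin n → ZMod 2)
    (N : ℕ) (hN : 1 ≤ N) (hper : ∀ k : ℕ, F^[k + N] y = F^[k] y)
    (hleast : ∀ N' : ℕ, 1 ≤ N' → (∀ k : ℕ, F^[k + N'] y = F^[k] y) → N ≤ N')
    (μ : Polynomial (ZMod 2)) (hmonic : μ.Monic) (hann : IsAnnihilating n F y μ)
    (hmin : ∀ p : Polynomial (ZMod 2), IsAnnihilating n F y p → μ.natDegree ≤ p.natDegree) :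
    μ.coeff 0 = 1 ∧
    μ ∣ (Polynomial.X ^ N - 1 : Polynomial (ZMod 2)) ∧
    (∀ T : ℕ, 1 ≤ T → μ ∣ (Polynomial.X ^ T - 1 : Polynomial (ZMod 2)) → N ≤ T) := by
  have hμ := (isAnnihilating_iff.1 hann).2
  have hdvd_X_pow_sub_one : μ ∣ X ^ N - 1 :=
    hmonic.dvd_of_aeval_apply_eq_zero hμ (fun p hp0 hp ↦ hmin p (isAnnihilating_iff.2 ⟨hp0, hp⟩))
      (aeval_X_pow_sub_one_seqShift_eq_zero_iff.2 hper)
  have hcoeff : μ.coeff 0 ≠ 0 :=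
    coeff_zero_ne_zero_of_dvd_X_pow_sub_one (by omega) hdvd_X_pow_sub_one
  refine ⟨Fin.eq_one_of_ne_zero _ hcoeff, hdvd_X_pow_sub_one, fun T hT hμT ↦ hleast T hT ?_⟩
  exact aeval_X_pow_sub_one_seqShift_eq_zero_iff (s := fun k ↦ F^[k] y).1
    (aeval_apply_eq_zero_of_dvd hμT hμ)
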